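/- arXiv:1004.1014 — 4 statements merged into one kernel-verified Lean document; each statement's English description precedes it below -/
import Mathlib

section
/- Let K ≥ 1 and let k = (k₁,…,kₙ) ∈ ℤⁿ \ {0} have coprime components and satisfy Σᵢ |kᵢ| ≤ K. Then there exists a matrix A ∈ GL(n,ℤ) whose first row equals k, such that every row of A has ℓ¹-norm at most K. -/
/-!
Induction on `n`. Write `k = (k₀, g • m)` with `g` the gcd of the tail of `k` and `m` primitive,
and complete `m` by induction to a unimodular `B` with short rows. In `1 ⊕ B` the first two rows
are `e₀` and `(0, m)`; replace them by `k₀ • e₀ + g • (0, m) = k` and `e • e₀ + c • (0, m)`, which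
multiplies the determinant by `k₀ c - g e`. A Bézout relation `k₀ c - g e = 1` with
`0 ≤ e < |k₀|` (or `c = 0` if `k₀ = 0`) forces `|c| ≤ |g|`, so the new row has `ℓ¹`-norm
`|e| + |c| ‖m‖₁ ≤ ‖k‖₁`.
If the tail of `k` vanishes, `k = ±e₀` and a diagonal matrix does.
-/

open Finset

namespace Matrix

theorem updateRow_updateRow_eq_submatrix_swap {m o α : Type*} [DecidableEq m] (M : Matrix m o α)
    {i j : m} (hij : i ≠ j) :
    (M.updateRow j (M i)).updateRow i (M j) = M.submatrix (Equiv.swap i j) id := by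
  ext k l
  rcases eq_or_ne k i with rfl | hki
  · simp
  rcases eq_or_ne k j with rfl | hkj
  · simp [hki]
  · simp [hki, hkj, Equiv.swap_apply_of_ne_of_ne]

section Determinant

variable {n R : Type*} [Fintype n] [DecidableEq n] [CommRing R]

theorem det_updateRow_updateRow_add_smul (M : Matrix n n R) {i j : n} (hij : i ≠ j)
    (a b c d : R) :
    ((M.updateRow i (a • M i + b • M j)).updateRow j (c • M i + d • M j)).det =
      (a * d - b * c) * M.det := by
  have hi : (M.updateRow i (a • M i + b • M j)).det = a * M.det := by
    rw [det_updateRow_add, det_updateRow_smul, det_updateRow_smul, updateRow_eq_self,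
      det_updateRow_eq_zero hij.symm, mul_zero, add_zero]
  have hswap : ((M.updateRow j (M i)).updateRow i (M j)).det = -M.det := by
    rw [updateRow_updateRow_eq_submatrix_swap M hij, det_permute, Equiv.Perm.sign_swap hij]
    simp
  have hrepeat : ((M.updateRow j (M i)).updateRow i (M i)).det = 0 :=
    det_zero_of_row_eq hij (by rw [updateRow_self, updateRow_ne hij.symm, updateRow_self])
  have hji : ((M.updateRow i (a • M i + b • M j)).updateRow j (M i)).det = -(b * M.det) := by
    rw [updateRow_comm _ hij, det_updateRow_add, det_updateRow_smul, det_updateRow_smul,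
      hswap, hrepeat, mul_zero, zero_add, mul_neg]
  have hjj : (M.updateRow i (a • M i + b • M j)).updateRow j (M j) =
      M.updateRow i (a • M i + b • M j) := by
    simpa [updateRow_ne hij.symm] using updateRow_eq_self (M.updateRow i (a • M i + b • M j)) j
  rw [det_updateRow_add, det_updateRow_smul, det_updateRow_smul, hji, hjj, hi]
  ring

end Determinant

section ExtendByOne

variable {R : Type*} [CommRing R] {n : ℕ}

def extendByOne (B : Matrix (Fin n) (Fin n) R) : Matrix (Fin (n + 1)) (Fin (n + 1)) R :=
  of (Fin.cons (Pi.single 0 1) fun i => Fin.cons 0 (B i))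

@[simp]
theorem extendByOne_zero (B : Matrix (Fin n) (Fin n) R) : B.extendByOne 0 = Pi.single 0 1 :=
  rfl

@[simp]
theorem extendByOne_succ (B : Matrix (Fin n) (Fin n) R) (i : Fin n) :
    B.extendByOne i.succ = Fin.cons 0 (B i) :=
  rfl

@[simp]
theorem det_extendByOne (B : Matrix (Fin n) (Fin n) R) : B.extendByOne.det = B.det := by
  rw [det_succ_column_zero, Fin.sum_univ_succ]
  simp only [extendByOne_zero, extendByOne_succ, Fin.cons_zero, Pi.single_eq_same, Fin.val_zero,
    pow_zero, one_mul, mul_zero, zero_mul, sum_const_zero, add_zero, Fin.succAbove_zero]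
  rfl

end ExtendByOne

end Matrix

namespace Int

theorem one_le_sum_abs_of_gcd_eq_one {ι : Type*} [Fintype ι] {k : ι → ℤ}
    (hk : univ.gcd k = 1) : 1 ≤ ∑ i, |k i| := by
  obtain ⟨i, hi⟩ : ∃ i, k i ≠ 0 := by
    by_contra! h
    simp [Finset.gcd_eq_zero_iff.mpr fun i _ => h i] at hk
  calc 1 ≤ |k i| := Int.one_le_abs hi
    _ ≤ ∑ i, |k i| := single_le_sum (fun j _ => abs_nonneg (k j)) (mem_univ i)

theorem isCoprime_apply_zero_gcd_tail {n : ℕ} {k : Fin (n + 1) → ℤ} (hk : univ.gcd k = 1) :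
    IsCoprime (k 0) (univ.gcd (Fin.tail k)) := by
  rw [Int.isCoprime_iff_gcd_eq_one, ← Nat.dvd_one, ← Int.natCast_dvd_natCast, Nat.cast_one, ← hk]
  refine Finset.dvd_gcd fun i _ => ?_
  refine Fin.cases (Int.gcd_dvd_left _ _) (fun i => ?_) i
  exact (Int.gcd_dvd_right _ _).trans (Finset.gcd_dvd (mem_univ i))

theorem exists_mul_sub_mul_eq_one_abs_add_abs_mul_le {a d : ℤ} (h : IsCoprime a d) (hd : d ≠ 0)
    {s : ℤ} (hs : 1 ≤ s) : ∃ c e : ℤ, a * c - d * e = 1 ∧ |e| + |c| * s ≤ |a| + |d| * s := by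
  rcases eq_or_ne a 0 with rfl | ha
  · obtain hd1 | hd1 := Int.isUnit_iff.mp (isCoprime_zero_left.mp h) <;>
      exact ⟨0, -d, by simp [hd1], by simp [hd1, hs]⟩
  obtain ⟨u, w, huw⟩ := h
  -- `e` is the least nonnegative solution of `d * e ≡ -1 [ZMOD a]`.
  set e := -w % a with he
  have he0 : 0 ≤ e := Int.emod_nonneg _ ha
  have hea : e < |a| := Int.emod_lt_abs _ ha
  have hde : a * (u - d * (-w / a)) - d * e = 1 := by
    rw [he, Int.emod_def]; linear_combination huw
  refine ⟨_, e, hde, ?_⟩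
  have hc : |u - d * (-w / a)| ≤ |d| := by
    refine le_of_mul_le_mul_left ?_ (abs_pos.mpr ha)
    calc |a| * |u - d * (-w / a)| = |1 + d * e| := by rw [← abs_mul]; congr 1; linarith
      _ ≤ 1 + |d| * e := by simpa [abs_mul, abs_of_nonneg he0] using abs_add_le 1 (d * e)
      _ ≤ |a| * |d| := by nlinarith [Int.one_le_abs hd]
  rw [abs_of_nonneg he0]
  nlinarith

end Int

open Matrix

variable {n : ℕ}

structure IsShortCompletion (k : Fin (n + 1) → ℤ) (A : Matrix (Fin (n + 1)) (Fin (n + 1)) ℤ) :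
    Prop where
  isUnit_det : IsUnit A.det
  row_zero : A 0 = k
  sum_abs_row_le : ∀ i, ∑ j, |A i j| ≤ ∑ j, |k j|

theorem Fin.sum_abs_cons {R : Type*} [AddCommGroup R] [LinearOrder R] [IsOrderedAddMonoid R] (x : R)
    (v : Fin n → R) : ∑ j, |(Fin.cons x v : Fin (n + 1) → R) j| = |x| + ∑ j, |v j| := by
  simp [Fin.sum_univ_succ]

theorem Fin.smul_single_zero_add_smul_cons_zero {R : Type*} [Ring R] (x y : R) (v : Fin n → R) :
    x • Pi.single 0 1 + y • (Fin.cons 0 v : Fin (n + 1) → R) = Fin.cons x (y • v) := by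
  ext j
  refine Fin.cases (by simp) (fun j => ?_) j
  simp [Fin.succ_ne_zero]

theorem exists_isShortCompletion_of_tail_eq_zero {k : Fin (n + 1) → ℤ} (hk : univ.gcd k = 1)
    (htail : Fin.tail k = 0) : ∃ A, IsShortCompletion k A := by
  have hk_eq : k = k 0 • (1 : Matrix (Fin (n + 1)) (Fin (n + 1)) ℤ) 0 := by
    ext j
    refine Fin.cases (by simp) (fun j => ?_) j
    simpa [one_apply, (Fin.succ_ne_zero j).symm, Fin.tail] using congr_fun htail j
  have hunit : IsUnit (k 0) := by
    refine isUnit_of_dvd_one (hk ▸ Finset.dvd_gcd fun j _ => ?_)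
    exact ⟨_, congr_fun hk_eq j⟩
  refine ⟨(1 : Matrix _ _ ℤ).updateRow 0 k, ?_, by simp, fun i => ?_⟩
  · rw [hk_eq, det_updateRow_smul, updateRow_eq_self, det_one, mul_one]
    exact hunit
  · rcases eq_or_ne i 0 with rfl | hi
    · simp
    · simpa [updateRow_ne hi, one_apply, apply_ite (|·|)] using
        Int.one_le_sum_abs_of_gcd_eq_one hk

theorem IsShortCompletion.exists_cons_smul {m : Fin (n + 1) → ℤ} {B : Matrix _ _ ℤ}
    (hB : IsShortCompletion m B) {a d c e : ℤ} (hd : d ≠ 0) (hdet : a * c - d * e = 1)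
    (hbound : |e| + |c| * ∑ j, |m j| ≤ |a| + |d| * ∑ j, |m j|) :
    ∃ A, IsShortCompletion (Fin.cons a (d • m)) A := by
  have hsum : ∑ j, |(Fin.cons a (d • m) : Fin (n + 2) → ℤ) j| = |a| + |d| * ∑ j, |m j| := by
    simp [Fin.sum_abs_cons, abs_mul, mul_sum]
  have hE1 : B.extendByOne 1 = Fin.cons 0 m := by
    rw [← Fin.succ_zero_eq_one, extendByOne_succ, hB.row_zero]
  obtain ⟨A, hA⟩ : ∃ A, A = (B.extendByOne.updateRow 0 (a • B.extendByOne 0 +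
      d • B.extendByOne 1)).updateRow 1 (e • B.extendByOne 0 + c • B.extendByOne 1) := ⟨_, rfl⟩
  have hA0 : A 0 = Fin.cons a (d • m) := by
    rw [hA, updateRow_ne zero_ne_one, updateRow_self, hE1, extendByOne_zero,
      Fin.smul_single_zero_add_smul_cons_zero]
  refine ⟨A, ⟨?_, hA0, fun i => ?_⟩⟩
  · rw [hA, det_updateRow_updateRow_add_smul _ zero_ne_one, hdet, one_mul, det_extendByOne]
    exact hB.isUnit_det
  rw [hsum]
  refine Fin.cases (by rw [hA0, hsum]) (fun i => ?_) i
  refine Fin.cases ?_ (fun i => ?_) i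
  · rw [Fin.succ_zero_eq_one, hA, updateRow_self, hE1, extendByOne_zero,
      Fin.smul_single_zero_add_smul_cons_zero, Fin.sum_abs_cons]
    simpa [abs_mul, mul_sum] using hbound
  · have h1 : i.succ.succ ≠ 1 := by
      rw [← Fin.succ_zero_eq_one]
      exact (Fin.succ_injective _).ne (Fin.succ_ne_zero i)
    have hm_nonneg : 0 ≤ ∑ j, |m j| := sum_nonneg fun j _ => abs_nonneg (m j)
    rw [hA, updateRow_ne h1, updateRow_ne (Fin.succ_ne_zero _), extendByOne_succ,
      Fin.sum_abs_cons, abs_zero, zero_add]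
    calc ∑ j, |B i.succ j| ≤ ∑ j, |m j| := hB.sum_abs_row_le i.succ
      _ ≤ |a| + |d| * ∑ j, |m j| := by nlinarith [abs_nonneg a, Int.one_le_abs hd]

theorem exists_isShortCompletion_of_tail_ne_zero {k : Fin (n + 2) → ℤ} (hk : univ.gcd k = 1)
    (htail : Fin.tail k ≠ 0)
    (ih : ∀ m : Fin (n + 1) → ℤ, univ.gcd m = 1 → ∃ B, IsShortCompletion m B) :
    ∃ A, IsShortCompletion k A := by
  obtain ⟨m, hm, hgm⟩ := Finset.extract_gcd (Fin.tail k) univ_nonempty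
  have hg : univ.gcd (Fin.tail k) ≠ 0 := fun h =>
    htail (funext fun j => Finset.gcd_eq_zero_iff.mp h j (mem_univ j))
  obtain ⟨B, hB⟩ := ih m hgm
  obtain ⟨c, e, hdet, hbound⟩ := Int.exists_mul_sub_mul_eq_one_abs_add_abs_mul_le
    (Int.isCoprime_apply_zero_gcd_tail hk) hg (Int.one_le_sum_abs_of_gcd_eq_one hgm)
  have hk_eq : k = Fin.cons (k 0) (univ.gcd (Fin.tail k) • m) := by
    conv_lhs => rw [← Fin.cons_self_tail k]
    exact congrArg _ (funext fun j => hm j (mem_univ j))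
  rw [hk_eq]
  exact hB.exists_cons_smul hg hdet hbound

theorem exists_isShortCompletion {k : Fin (n + 1) → ℤ} (hk : univ.gcd k = 1) :
    ∃ A, IsShortCompletion k A := by
  induction n with
  | zero => exact exists_isShortCompletion_of_tail_eq_zero hk (Subsingleton.elim _ _)
  | succ n ih =>
    by_cases htail : Fin.tail k = 0
    · exact exists_isShortCompletion_of_tail_eq_zero hk htail
    · exact exists_isShortCompletion_of_tail_ne_zero hk htail fun m hm => ih hm

theorem stmt_3_general (n : ℕ) (hn : 0 < n) (K : ℝ)
    (k : Fin n → ℤ) (hcop : Finset.univ.gcd k = 1)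
    (hnorm : (∑ i, (|k i| : ℝ)) ≤ K) :
    ∃ A : Matrix (Fin n) (Fin n) ℤ,
      (A.det = 1 ∨ A.det = -1) ∧
      (∀ j, A ⟨0, hn⟩ j = k j) ∧
      (∀ i, (∑ j, (|A i j| : ℝ)) ≤ K) := by
  obtain ⟨n, rfl⟩ := Nat.exists_eq_add_one_of_ne_zero hn.ne'
  obtain ⟨A, hA⟩ := exists_isShortCompletion hcop
  refine ⟨A, Int.isUnit_iff.mp hA.isUnit_det, fun j => congrFun hA.row_zero j, fun i => ?_⟩
  calc ∑ j, (|A i j| : ℝ) = ((∑ j, |A i j| : ℤ) : ℝ) := by push_cast; rfl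
    _ ≤ ((∑ j, |k j| : ℤ) : ℝ) := Int.cast_le.mpr (hA.sum_abs_row_le i)
    _ = ∑ j, (|k j| : ℝ) := by push_cast; rfl
    _ ≤ K := hnorm

theorem stmt_3 (n : ℕ) (hn : 0 < n) (K : ℝ) (hK : 1 ≤ K)
    (k : Fin n → ℤ) (hk : k ≠ 0) (hcop : Finset.univ.gcd k = 1)
    (hnorm : (∑ i, (|k i| : ℝ)) ≤ K) :
    ∃ A : Matrix (Fin n) (Fin n) ℤ,
      (A.det = 1 ∨ A.det = -1) ∧
      (∀ j, A ⟨0, hn⟩ j = k j) ∧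
      (∀ i, (∑ j, (|A i j| : ℝ)) ≤ K) :=
  stmt_3_general n hn K k hcop hnorm
end

section
/- Let k = (k₁,…,kₙ) ∈ ℤⁿ with n ≥ 2, k_* = (k₁,…,k_{n-1}) ≠ 0, d = gcd(k₁,…,k_{n-1}), and gcd(d, kₙ) = 1 (i.e. the components of k are coprime). Suppose B ∈ GL(n-1,ℤ) has first row equal to d⁻¹·k_* and every row of B has ℓ¹-norm at most K, and suppose Σᵢ |kᵢ| ≤ K. Then there exists A ∈ GL(n,ℤ) whose first row equals k and whose every row has ℓ¹-norm at most K. -/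
/-!
With `B' = diag(B, 1)`, take `A = E * B'`, where `E` is the identity except for the block
`!![d, t; v, u]` on the first and last coordinates. Then the first row of `A` is `k`, its middle
rows are those of `B` padded by `0`, its last row is `(v • B₀, u)`, and
`det A = (d * u - t * v) * det B`. Choosing Bezout coefficients `d * u - t * v = 1` with `|v| < |d|`
gives `|d| * |u| ≤ 1 + (|d| - 1) * |t|`, so
`|d| * ‖(v • B₀, u)‖₁ ≤ (|d| - 1) * ‖k‖₁ + 1 ≤ |d| * K`, using `1 ≤ K`.
-/

namespace Matrix

variable {ι R : Type*} [Fintype ι] [DecidableEq ι] [CommRing R]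

theorem det_updateRow_updateRow_swap (M : Matrix ι ι R) {i j : ι} (h : i ≠ j) :
    ((M.updateRow i (M j)).updateRow j (M i)).det = -M.det := by
  have hswap : (M.updateRow i (M j)).updateRow j (M i) = M.submatrix (Equiv.swap i j) id := by
    ext a b
    rcases eq_or_ne a j with rfl | haj
    · simp
    · rcases eq_or_ne a i with rfl | hai
      · simp [updateRow_ne haj]
      · simp [updateRow_ne haj, updateRow_ne hai, Equiv.swap_apply_of_ne_of_ne hai haj]
  rw [hswap, det_permute, Equiv.Perm.sign_swap h]
  simp

theorem det_updateRow_updateRow_linearCombination (M : Matrix ι ι R) {i j : ι} (h : i ≠ j)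
    (a b c e : R) :
    ((M.updateRow i (a • M i + b • M j)).updateRow j (c • M i + e • M j)).det
      = (a * e - b * c) * M.det := by
  have expand : ∀ y : ι → R, ((M.updateRow i (a • M i + b • M j)).updateRow j y).det
      = a * (M.updateRow j y).det + b * ((M.updateRow i (M j)).updateRow j y).det := fun y => by
    rw [updateRow_comm _ h, det_updateRow_add, det_updateRow_smul, det_updateRow_smul,
      updateRow_comm _ h.symm, updateRow_comm _ h.symm, updateRow_eq_self]
  have hii : (M.updateRow j (M i)).det = 0 := det_zero_of_row_eq h (by simp [updateRow_ne h])
  have hjj : ((M.updateRow i (M j)).updateRow j (M j)).det = 0 :=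
    det_zero_of_row_eq h (by simp [updateRow_ne h])
  rw [det_updateRow_add, det_updateRow_smul, det_updateRow_smul, expand, expand,
    updateRow_eq_self, det_updateRow_updateRow_swap M h, hii, hjj]
  ring

variable {n : ℕ}

def blockDiagOne (B : Matrix (Fin n) (Fin n) R) : Matrix (Fin (n + 1)) (Fin (n + 1)) R :=
  reindex finSumFinEquiv finSumFinEquiv (fromBlocks B 0 0 1)

@[simp]
theorem blockDiagOne_castSucc_castSucc (B : Matrix (Fin n) (Fin n) R) (i j : Fin n) :
    blockDiagOne B i.castSucc j.castSucc = B i j := by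
  simp [blockDiagOne, Fin.castSucc]

@[simp]
theorem blockDiagOne_castSucc_last (B : Matrix (Fin n) (Fin n) R) (i : Fin n) :
    blockDiagOne B i.castSucc (Fin.last n) = 0 := by
  simp [blockDiagOne, Fin.castSucc]

@[simp]
theorem blockDiagOne_last_castSucc (B : Matrix (Fin n) (Fin n) R) (j : Fin n) :
    blockDiagOne B (Fin.last n) j.castSucc = 0 := by
  simp [blockDiagOne, Fin.castSucc]

@[simp]
theorem blockDiagOne_last_last (B : Matrix (Fin n) (Fin n) R) :
    blockDiagOne B (Fin.last n) (Fin.last n) = 1 := by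
  simp [blockDiagOne]

@[simp]
theorem blockDiagOne_zero_castSucc (B : Matrix (Fin (n + 1)) (Fin (n + 1)) R) (j : Fin (n + 1)) :
    blockDiagOne B 0 j.castSucc = B 0 j := by
  simpa using blockDiagOne_castSucc_castSucc B 0 j

@[simp]
theorem blockDiagOne_zero_last (B : Matrix (Fin (n + 1)) (Fin (n + 1)) R) :
    blockDiagOne B 0 (Fin.last _) = 0 := by
  simpa using blockDiagOne_castSucc_last B 0

@[simp]
theorem det_blockDiagOne (B : Matrix (Fin n) (Fin n) R) : (blockDiagOne B).det = B.det := by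
  simp [blockDiagOne]

end Matrix

open Matrix

section Completion

variable {R : Type*} [CommRing R] {n : ℕ}

/-- The matrix with rows `(d • B₀, t)`, `(Bᵢ, 0)` for `0 < i ≤ n`, and `(v • B₀, u)`. -/
def completionMatrix (B : Matrix (Fin (n + 1)) (Fin (n + 1)) R) (d t u v : R) :
    Matrix (Fin (n + 2)) (Fin (n + 2)) R :=
  let B' := blockDiagOne B
  (B'.updateRow 0 (d • B' 0 + t • B' (Fin.last _))).updateRow (Fin.last _)
    (v • B' 0 + u • B' (Fin.last _))

variable (B : Matrix (Fin (n + 1)) (Fin (n + 1)) R) (d t u v : R)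

theorem det_completionMatrix : (completionMatrix B d t u v).det = (d * u - t * v) * B.det := by
  rw [completionMatrix, det_updateRow_updateRow_linearCombination _ Fin.last_pos.ne,
    det_blockDiagOne]

@[simp]
theorem completionMatrix_zero_castSucc (j : Fin (n + 1)) :
    completionMatrix B d t u v 0 j.castSucc = d * B 0 j := by
  simp [completionMatrix, updateRow_apply]

@[simp]
theorem completionMatrix_zero_last : completionMatrix B d t u v 0 (Fin.last _) = t := by
  simp [completionMatrix, updateRow_apply]

@[simp]
theorem completionMatrix_last_castSucc (j : Fin (n + 1)) :
    completionMatrix B d t u v (Fin.last _) j.castSucc = v * B 0 j := by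
  simp [completionMatrix, updateRow_apply]

@[simp]
theorem completionMatrix_last_last : completionMatrix B d t u v (Fin.last _) (Fin.last _) = u := by
  simp [completionMatrix, updateRow_apply]

theorem completionMatrix_castSucc {i : Fin (n + 1)} (hi : i ≠ 0) :
    completionMatrix B d t u v i.castSucc = blockDiagOne B i.castSucc := by
  rw [completionMatrix, updateRow_ne (Fin.castSucc_lt_last i).ne,
    updateRow_ne (by simpa using hi)]

end Completion

theorem Int.exists_bezout_bounded {d t : ℤ} (hd : d ≠ 0) (h : Int.gcd d t = 1) :
    ∃ u v : ℤ, d * u - t * v = 1 ∧ |v| < |d| ∧ |d| * |u| ≤ 1 + (|d| - 1) * |t| := by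
  obtain ⟨a, b, hab⟩ := Int.isCoprime_iff_gcd_eq_one.mpr h
  -- reducing the coefficient of `t` modulo `d` is what makes `|v| < |d|`
  set v := -b % d
  have hv0 : 0 ≤ v := Int.emod_nonneg _ hd
  have hvd : v < |d| := Int.emod_lt_abs _ hd
  have hdu : d * (a - -b / d * t) = 1 + t * v := by
    linear_combination hab - t * Int.emod_add_mul_ediv (-b) d
  refine ⟨a - -b / d * t, v, by linear_combination hdu, by rwa [abs_of_nonneg hv0], ?_⟩
  calc |d| * |a - -b / d * t| = |1 + t * v| := by rw [← abs_mul, hdu]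
    _ ≤ 1 + |t| * v := by simpa [abs_mul, abs_of_nonneg hv0] using abs_add_le 1 (t * v)
    _ ≤ 1 + (|d| - 1) * |t| := by nlinarith [abs_nonneg t]

theorem abs_mul_add_abs_le_of_bezout {d t u v : ℤ} {b K : ℝ} (hv : |v| < |d|)
    (hu : |d| * |u| ≤ 1 + (|d| - 1) * |t|) (hb : 0 ≤ b) (hsum : |(d : ℝ)| * b + |(t : ℝ)| ≤ K)
    (hK : 1 ≤ K) : |(v : ℝ)| * b + |(u : ℝ)| ≤ K := by
  have hv' : |(v : ℝ)| + 1 ≤ |(d : ℝ)| := by exact_mod_cast Int.add_one_le_of_lt hv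
  have hu' : |(d : ℝ)| * |(u : ℝ)| ≤ 1 + (|(d : ℝ)| - 1) * |(t : ℝ)| := by exact_mod_cast hu
  have hd1 : 1 ≤ |(d : ℝ)| := by linarith [abs_nonneg (v : ℝ)]
  have hd : 0 < |(d : ℝ)| := by linarith
  refine le_of_mul_le_mul_left ?_ hd
  calc |(d : ℝ)| * (|(v : ℝ)| * b + |(u : ℝ)|)
      ≤ (|(d : ℝ)| - 1) * (|(d : ℝ)| * b + |(t : ℝ)|) + 1 := by
        nlinarith [mul_le_mul_of_nonneg_right (le_sub_iff_add_le.2 hv') (mul_nonneg hd.le hb)]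
    _ ≤ |(d : ℝ)| * K := by nlinarith [mul_le_mul_of_nonneg_left hsum (sub_nonneg.2 hd1)]

section RowNorms

variable {n : ℕ} (B : Matrix (Fin (n + 1)) (Fin (n + 1)) ℤ) (d t u v : ℤ)

theorem sum_abs_completionMatrix_last :
    ∑ j, |((completionMatrix B d t u v (Fin.last _) j : ℤ) : ℝ)|
      = |(v : ℝ)| * ∑ j, (|B 0 j| : ℝ) + |(u : ℝ)| := by
  rw [Fin.sum_univ_castSucc, Finset.mul_sum]
  simp [abs_mul]

theorem sum_abs_completionMatrix_castSucc {i : Fin (n + 1)} (hi : i ≠ 0) :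
    ∑ j, |((completionMatrix B d t u v i.castSucc j : ℤ) : ℝ)| = ∑ j, (|B i j| : ℝ) := by
  simp [completionMatrix_castSucc B d t u v hi, Fin.sum_univ_castSucc]

end RowNorms

theorem stmt_6_general (m : ℕ) (K : ℝ) (hK : 1 ≤ K)
    (k : Fin (m + 2) → ℤ)
    (hstar : (fun i : Fin (m + 1) => k i.castSucc) ≠ 0)
    (d : ℤ)
    (hcop : Int.gcd d (k (Fin.last (m + 1))) = 1)
    (B : Matrix (Fin (m + 1)) (Fin (m + 1)) ℤ)
    (hBdet : B.det = 1 ∨ B.det = -1)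
    (hBrow1 : ∀ j, d * B 0 j = k j.castSucc)
    (hBnorm : ∀ i, (∑ j, (|B i j| : ℝ)) ≤ K)
    (hknorm : (∑ i, (|k i| : ℝ)) ≤ K) :
    ∃ A : Matrix (Fin (m + 2)) (Fin (m + 2)) ℤ,
      (A.det = 1 ∨ A.det = -1) ∧
      (∀ j, A 0 j = k j) ∧
      (∀ i, (∑ j, (|A i j| : ℝ)) ≤ K) := by
  set t := k (Fin.last (m + 1))
  have hd : d ≠ 0 := by
    rintro rfl
    exact hstar (funext fun j => by simpa using (hBrow1 j).symm)
  obtain ⟨u, v, hdet, hv, hu⟩ := Int.exists_bezout_bounded hd hcop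
  have hrow0 : ∀ j, completionMatrix B d t u v 0 j = k j :=
    Fin.lastCases (by simp [t]) fun j => by simp [hBrow1]
  have hk : ∑ i, (|k i| : ℝ) = |(d : ℝ)| * ∑ j, (|B 0 j| : ℝ) + |(t : ℝ)| := by
    rw [Fin.sum_univ_castSucc, Finset.mul_sum]
    simp [← hBrow1, abs_mul, t]
  refine ⟨completionMatrix B d t u v, ?_, hrow0, Fin.lastCases ?_ fun i => ?_⟩
  · rwa [det_completionMatrix, hdet, one_mul]
  · rw [sum_abs_completionMatrix_last]
    exact abs_mul_add_abs_le_of_bezout hv hu (Finset.sum_nonneg fun _ _ => abs_nonneg _)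
      (hk ▸ hknorm) hK
  · rcases eq_or_ne i 0 with rfl | hi
    · simpa [hrow0] using hknorm
    · rw [sum_abs_completionMatrix_castSucc B d t u v hi]
      exact hBnorm i

theorem stmt_6 (m : ℕ) (K : ℝ) (hK : 1 ≤ K)
    (k : Fin (m + 2) → ℤ)
    (hstar : (fun i : Fin (m + 1) => k i.castSucc) ≠ 0)
    (d : ℤ) (hd : d = Finset.univ.gcd (fun i : Fin (m + 1) => k i.castSucc))
    (hcop : Int.gcd d (k (Fin.last (m + 1))) = 1)
    (B : Matrix (Fin (m + 1)) (Fin (m + 1)) ℤ)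
    (hBdet : B.det = 1 ∨ B.det = -1)
    (hBrow1 : ∀ j, d * B 0 j = k j.castSucc)
    (hBnorm : ∀ i, (∑ j, (|B i j| : ℝ)) ≤ K)
    (hknorm : (∑ i, (|k i| : ℝ)) ≤ K) :
    ∃ A : Matrix (Fin (m + 2)) (Fin (m + 2)) ℤ,
      (A.det = 1 ∨ A.det = -1) ∧
      (∀ j, A 0 j = k j) ∧
      (∀ i, (∑ j, (|A i j| : ℝ)) ≤ K) :=
  stmt_6_general m K hK k hstar d hcop B hBdet hBrow1 hBnorm hknorm
end

section
/- Let ω : [0,T] → ℝⁿ be continuous with ω(t) ≠ 0 for all t, let i,j be indices with |ω(t')| = |ω_j(t')| (supremum norm attained at coordinate j at time t'), and suppose |ω_i(t*)/‖ω(t*)‖ − ω_i(0)/‖ω(0)‖| ≥ 6/K for some t* ∈ [0,T] and K ≥ 1, where ‖·‖ is the supremum norm. Then there exists t' ∈ [0,t*], a nonzero vector k ∈ ℤⁿ of the form k = q·eᵢ − p·e_j with p, q coprime integers, q ≥ 1, |p| + |q| < K, an index j, and k·ω(t') = 0. -/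
/-!
Along `[0, t*]` the continuous function `f t = ωᵢ(t) / ‖ω(t)‖` takes values in `[-1, 1]` and sweeps
an interval of length at least `6 / K`. Such an interval contains a fraction `p / q` with
`q ≤ ⌈K / 3⌉`, hence `|p| + q < K`, and by the intermediate value theorem `f t' = p / q` for some
`t'`. Choosing `j` with `|ωⱼ(t')| = ‖ω(t')‖` and fixing the sign of `p` by that of `ωⱼ(t')` turns
this into `q ωᵢ(t') - p ωⱼ(t') = 0`.
-/

open Set

theorem Rat.exists_mem_Ioo_den_le (a b : ℝ) {q : ℕ} (hq : 0 < q) (hab : (q : ℝ)⁻¹ < b - a) :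
    ∃ r : ℚ, (r : ℝ) ∈ Ioo a b ∧ r.den ≤ q := by
  set p : ℤ := ⌊q * a⌋ + 1
  have hqR : (0 : ℝ) < q := by exact_mod_cast hq
  refine ⟨p / q, ⟨?_, ?_⟩, ?_⟩
  · rw [Rat.cast_div, Rat.cast_intCast, Rat.cast_natCast, lt_div_iff₀ hqR, mul_comm]
    exact_mod_cast Int.lt_floor_add_one (q * a)
  · rw [Rat.cast_div, Rat.cast_intCast, Rat.cast_natCast, div_lt_iff₀ hqR]
    have hfloor := Int.floor_le ((q : ℝ) * a)
    have hqinv : (q : ℝ) * (q : ℝ)⁻¹ = 1 := mul_inv_cancel₀ hqR.ne'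
    push_cast [p]
    nlinarith
  · have hdvd := Rat.den_dvd p q
    rw [Rat.divInt_eq_div] at hdvd
    exact Nat.le_of_dvd hq (Int.natCast_dvd_natCast.mp (by exact_mod_cast hdvd))

theorem Rat.abs_num_lt_den {r : ℚ} (hr : |r| < 1) : |r.num| < r.den := by
  rw [← Rat.num_abs_eq_abs_num, ← Rat.den_abs_eq_den]
  exact Rat.num_lt_denom_iff.mpr hr

theorem exists_rat_mem_Ioo_abs_num_add_den_lt {a b K : ℝ} (hK : 0 < K) (ha : -1 ≤ a) (hb : b ≤ 1)
    (hab : 6 / K ≤ b - a) : ∃ r : ℚ, (r : ℝ) ∈ Ioo a b ∧ (|r.num| : ℝ) + r.den < K := by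
  have hK3 : 3 ≤ K := by
    rw [div_le_iff₀ hK] at hab
    nlinarith
  set q := ⌈K / 3⌉₊
  have hq : K / 3 ≤ q := Nat.le_ceil _
  have hq' : (q : ℝ) < K / 3 + 1 := Nat.ceil_lt_add_one (by positivity)
  have hqpos : 0 < q := by exact_mod_cast (by positivity : 0 < K / 3).trans_le hq
  have hinv : (q : ℝ)⁻¹ < b - a := by
    calc (q : ℝ)⁻¹ ≤ 3 / K := by
          rw [inv_le_comm₀ (by positivity) (by positivity), inv_div]; exact hq
      _ < 6 / K := by gcongr; norm_num
      _ ≤ b - a := hab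
  obtain ⟨r, ⟨hra, hrb⟩, hden⟩ := Rat.exists_mem_Ioo_den_le a b hqpos hinv
  have hnum : |r.num| + 1 ≤ r.den :=
    Rat.abs_num_lt_den (by exact_mod_cast abs_lt.mpr ⟨ha.trans_lt hra, hrb.trans_le hb⟩)
  refine ⟨r, ⟨hra, hrb⟩, ?_⟩
  have hnumR : (|r.num| : ℝ) + 1 ≤ r.den := by exact_mod_cast hnum
  have hdenR : (r.den : ℝ) ≤ q := by exact_mod_cast hden
  linarith

theorem abs_apply_div_norm_le_one {ι : Type*} [Fintype ι] (v : ι → ℝ) (i : ι) :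
    |v i / ‖v‖| ≤ 1 := by
  rw [abs_div, abs_norm]
  exact div_le_one_of_le₀ (by simpa using norm_le_pi_norm v i) (norm_nonneg v)

theorem exists_abs_apply_eq_norm {ι : Type*} [Fintype ι] [Nonempty ι] (v : ι → ℝ) :
    ∃ j, |v j| = ‖v‖ := by
  obtain ⟨j, -, hj⟩ := Finset.exists_mem_eq_sup Finset.univ Finset.univ_nonempty (‖v ·‖₊)
  refine ⟨j, ?_⟩
  rw [← Real.norm_eq_abs, ← coe_nnnorm, ← coe_nnnorm, Pi.nnnorm_def, hj]

theorem exists_isUnit_mul_apply_eq_norm {ι : Type*} [Fintype ι] [Nonempty ι] (v : ι → ℝ) :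
    ∃ j, ∃ s : ℤ, IsUnit s ∧ s * v j = ‖v‖ := by
  obtain ⟨j, hj⟩ := exists_abs_apply_eq_norm v
  rcases abs_choice (v j) with h | h
  · exact ⟨j, 1, isUnit_one, by simp [← hj, h]⟩
  · exact ⟨j, -1, isUnit_one.neg, by simp [← hj, h]⟩

theorem sum_smul_single_sub_smul_single_mul {ι : Type*} [Fintype ι] [DecidableEq ι]
    (v : ι → ℝ) (i j : ι) (p q : ℤ) :
    ∑ l, ((q • Pi.single i (1 : ℤ) - p • Pi.single j (1 : ℤ) : ι → ℤ) l : ℝ) * v l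
      = q * v i - p * v j := by
  simp [sub_mul, Finset.sum_sub_distrib, Pi.single_apply]

theorem smul_single_sub_smul_single_ne_zero {ι : Type*} [DecidableEq ι] (i j : ι) {p q : ℤ}
    (hpq : |p| < q) : (q • Pi.single i (1 : ℤ) - p • Pi.single j (1 : ℤ) : ι → ℤ) ≠ 0 := by
  intro h
  have hi := congrFun h i
  by_cases hij : i = j
  · subst hij
    simp at hi
    linarith [le_abs_self p]
  · simp [hij] at hi
    linarith [abs_nonneg p]

theorem exists_resonance_of_apply_div_norm_eq {ι : Type*} [Fintype ι] {v : ι → ℝ} (hv : v ≠ 0)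
    {i : ι} {r : ℚ} (hr : v i / ‖v‖ = r) :
    ∃ j, ∃ p : ℤ, IsCoprime p r.den ∧ |p| = |r.num| ∧ (r.den : ℝ) * v i - p * v j = 0 := by
  have : Nonempty ι := by
    by_contra hempty
    exact hv (funext fun l => (hempty ⟨l⟩).elim)
  obtain ⟨j, s, hs, hsj⟩ := exists_isUnit_mul_apply_eq_norm v
  refine ⟨j, s * r.num, ?_, ?_, ?_⟩
  · rw [isCoprime_mul_unit_left_left hs, Int.isCoprime_iff_gcd_eq_one]
    exact r.reduced
  · rw [abs_mul, Int.isUnit_iff_abs_eq.mp hs, one_mul]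
  · have hvi : v i = r * ‖v‖ := by
      rw [← hr, div_mul_cancel₀ _ (norm_ne_zero_iff.mpr hv)]
    have hnum : (r : ℝ) * r.den = r.num := by exact_mod_cast Rat.mul_den_eq_num r
    rw [hvi, ← hsj]
    push_cast
    linear_combination (s * v j) * hnum

theorem stmt_9_general (n : ℕ) (T : ℝ)
    (ω : ℝ → (Fin n → ℝ))
    (hcont : ContinuousOn ω (Set.Icc 0 T))
    (hnz : ∀ t ∈ Set.Icc 0 T, ω t ≠ 0)
    (K : ℝ) (hK : 1 ≤ K)
    (i : Fin n) (tstar : ℝ) (htstar : tstar ∈ Set.Icc 0 T)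
    (hgap : 6 / K ≤ |ω tstar i / ‖ω tstar‖ - ω 0 i / ‖ω 0‖|) :
    ∃ t' ∈ Set.Icc 0 tstar, ∃ (j : Fin n) (p q : ℤ),
      1 ≤ q ∧ IsCoprime p q ∧ ((|p| : ℤ) : ℝ) + ((|q| : ℤ) : ℝ) < K ∧
      (q • Pi.single i (1 : ℤ) - p • Pi.single j (1 : ℤ) : Fin n → ℤ) ≠ 0 ∧
      (∑ l, (((q • Pi.single i (1 : ℤ) - p • Pi.single j (1 : ℤ) : Fin n → ℤ)) l : ℝ) * ω t' l) = 0 := by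
  have hsub : Icc 0 tstar ⊆ Icc 0 T := Icc_subset_Icc le_rfl htstar.2
  set f : ℝ → ℝ := fun t ↦ ω t i / ‖ω t‖
  have hf : ContinuousOn f (Icc 0 tstar) :=
    ((continuous_apply i).comp_continuousOn (hcont.mono hsub)).div (hcont.mono hsub).norm
      fun t ht ↦ norm_ne_zero_iff.mpr (hnz t (hsub ht))
  have hbound (t : ℝ) : -1 ≤ f t ∧ f t ≤ 1 := abs_le.mp (abs_apply_div_norm_le_one (ω t) i)
  have hlo : -1 ≤ min (f 0) (f tstar) := le_min (hbound 0).1 (hbound tstar).1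
  have hhi : max (f 0) (f tstar) ≤ 1 := max_le (hbound 0).2 (hbound tstar).2
  obtain ⟨r, hr, hsize⟩ := exists_rat_mem_Ioo_abs_num_add_den_lt (K := K) (by linarith) hlo hhi
    (by rwa [max_sub_min_eq_abs', abs_sub_comm])
  rw [← uIcc_of_le htstar.1] at hf
  obtain ⟨t', ht', hft'⟩ := intermediate_value_uIcc hf (Ioo_subset_Icc_self hr)
  rw [uIcc_of_le htstar.1] at ht'
  obtain ⟨j, p, hcop, hp, hres⟩ := exists_resonance_of_apply_div_norm_eq (hnz t' (hsub ht')) hft'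
  have hpden : |p| < r.den := hp ▸
    Rat.abs_num_lt_den (by exact_mod_cast abs_lt.mpr ⟨hlo.trans_lt hr.1, hr.2.trans_le hhi⟩)
  refine ⟨t', ht', j, p, r.den, by exact_mod_cast r.pos, hcop, ?_,
    smul_single_sub_smul_single_ne_zero i j hpden, ?_⟩
  · simpa [hp] using hsize
  · rw [sum_smul_single_sub_smul_single_mul]
    exact_mod_cast hres

theorem stmt_9 (n : ℕ) (T : ℝ) (hT : 0 ≤ T)
    (ω : ℝ → (Fin n → ℝ))
    (hcont : ContinuousOn ω (Set.Icc 0 T))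
    (hnz : ∀ t ∈ Set.Icc 0 T, ω t ≠ 0)
    (K : ℝ) (hK : 1 ≤ K)
    (i : Fin n) (tstar : ℝ) (htstar : tstar ∈ Set.Icc 0 T)
    (hgap : 6 / K ≤ |ω tstar i / ‖ω tstar‖ - ω 0 i / ‖ω 0‖|) :
    ∃ t' ∈ Set.Icc 0 tstar, ∃ (j : Fin n) (p q : ℤ),
      1 ≤ q ∧ IsCoprime p q ∧ ((|p| : ℤ) : ℝ) + ((|q| : ℤ) : ℝ) < K ∧
      (q • Pi.single i (1 : ℤ) - p • Pi.single j (1 : ℤ) : Fin n → ℤ) ≠ 0 ∧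
      (∑ l, (((q • Pi.single i (1 : ℤ) - p • Pi.single j (1 : ℤ) : Fin n → ℤ)) l : ℝ) * ω t' l) = 0 :=
  stmt_9_general n T ω hcont hnz K hK i tstar htstar hgap
end

section
/- Let f : [a,b] → ℝ be continuous with |f(b) − f(a)| ≥ l and f([a,b]) ⊆ [−1,1] for some l with 0 < l ≤ 2. Then there exist coprime integers p, q with q ≥ 1, |p| + |q| < 6/l, and a point t ∈ [a,b] such that f(t) = p/q. -/
/-!
Set `n = ⌈1/l⌉₊`. Between `f a` and `f b` lies an interval of length at least `l ≥ 1/n`, hence a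
fraction `r = p/n`, and by the intermediate value theorem `f` takes the value `r`. In lowest terms
`r` has denominator at most `n`, and since `|r| ≤ 1` its numerator is at most its denominator in
absolute value, so `|num r| + den r ≤ 2n < 2 (1/l + 1) ≤ 6/l`, the last step because `l ≤ 2`.
-/

open Set

variable {K : Type*} [Field K] [LinearOrder K] [IsStrictOrderedRing K] [FloorRing K]

theorem Rat.den_intCast_div_natCast_le (p : ℤ) {n : ℕ} (hn : n ≠ 0) : ((p : ℚ) / n).den ≤ n := by
  rw [← Rat.mkRat_eq_div, Rat.den_mkRat, if_neg hn]
  exact Nat.div_le_self n _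

theorem Rat.abs_num_le_den {r : ℚ} (h : |r| ≤ 1) : |r.num| ≤ r.den := by
  have hden : (0 : ℚ) ≤ r.den := r.den.cast_nonneg
  have : (|r.num| : ℚ) ≤ r.den := by
    rw [← Rat.mul_den_eq_num, abs_mul, abs_of_nonneg hden]
    exact mul_le_of_le_one_left hden h
  exact_mod_cast this

theorem exists_rat_den_le_mem_Icc {c d : K} {n : ℕ} (hn : 0 < n) (h : 1 ≤ n * (d - c)) :
    ∃ r : ℚ, r.den ≤ n ∧ (r : K) ∈ Icc c d := by
  have hn' : (0 : K) < n := by exact_mod_cast hn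
  refine ⟨⌈n * c⌉ / n, ?_, ?_, ?_⟩
  · exact Rat.den_intCast_div_natCast_le _ hn.ne'
  · push_cast
    rw [le_div_iff₀ hn', mul_comm]
    exact Int.le_ceil _
  · push_cast
    rw [div_le_iff₀ hn']
    linarith [Int.ceil_lt_add_one ((n : K) * c)]

theorem Nat.ceil_inv_lt_three_div {l : K} (hl : 0 < l) (hl2 : l ≤ 2) : (⌈l⁻¹⌉₊ : K) < 3 / l := by
  have h1 : 1 ≤ 2 / l := by rw [le_div_iff₀ hl]; linarith
  calc (⌈l⁻¹⌉₊ : K) < l⁻¹ + 1 := Nat.ceil_lt_add_one (inv_nonneg.mpr hl.le)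
    _ ≤ 3 / l := by rw [inv_eq_one_div]; linarith [show 1 / l + 2 / l = 3 / l by ring]

theorem exists_rat_mem_Icc_abs_num_add_den_lt {c d l : K} (hl : 0 < l) (hl2 : l ≤ 2)
    (hcd : l ≤ d - c) (hc : -1 ≤ c) (hd : d ≤ 1) :
    ∃ r : ℚ, (r : K) ∈ Icc c d ∧ (|r.num| : K) + r.den < 6 / l := by
  set n := ⌈l⁻¹⌉₊
  have hn : 0 < n := Nat.ceil_pos.mpr (inv_pos.mpr hl)
  have hnl : 1 ≤ n * (d - c) := by
    calc (1 : K) = l⁻¹ * l := (inv_mul_cancel₀ hl.ne').symm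
      _ ≤ n * (d - c) := mul_le_mul (Nat.le_ceil _) hcd hl.le (Nat.cast_nonneg _)
  obtain ⟨r, hrn, hr⟩ := exists_rat_den_le_mem_Icc hn hnl
  have hr1 : |(r : K)| ≤ 1 := abs_le.mpr ⟨hc.trans hr.1, hr.2.trans hd⟩
  have hnum : (|r.num| : K) ≤ r.den := by
    exact_mod_cast Rat.abs_num_le_den (by exact_mod_cast hr1)
  have hden : (r.den : K) ≤ n := by exact_mod_cast hrn
  have hn3 : (n : K) < 3 / l := Nat.ceil_inv_lt_three_div hl hl2
  refine ⟨r, hr, ?_⟩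
  linarith [show 2 * (3 / l) = 6 / l by ring]

theorem stmt_10 (a b : ℝ) (hab : a ≤ b) (f : ℝ → ℝ)
    (hcont : ContinuousOn f (Set.Icc a b))
    (l : ℝ) (hl : 0 < l) (hl2 : l ≤ 2)
    (hgap : l ≤ |f b - f a|)
    (himg : ∀ t ∈ Set.Icc a b, f t ∈ Set.Icc (-1 : ℝ) 1) :
    ∃ p q : ℤ, IsCoprime p q ∧ 1 ≤ q ∧ ((|p| : ℤ) : ℝ) + ((|q| : ℤ) : ℝ) < 6 / l ∧
      ∃ t ∈ Set.Icc a b, f t = (p : ℝ) / q := by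
  have ha := himg a (left_mem_Icc.mpr hab)
  have hb := himg b (right_mem_Icc.mpr hab)
  obtain ⟨r, hr, hsize⟩ := exists_rat_mem_Icc_abs_num_add_den_lt (c := min (f a) (f b))
    (d := max (f a) (f b)) hl hl2 (by rwa [max_sub_min_eq_abs', abs_sub_comm])
    (le_min ha.1 hb.1) (max_le ha.2 hb.2)
  rw [← uIcc_of_le hab] at hcont
  obtain ⟨t, ht, hft⟩ := intermediate_value_uIcc hcont hr
  refine ⟨r.num, r.den, r.isCoprime_num_den, by exact_mod_cast r.pos, ?_, t, ?_, ?_⟩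
  · simpa using hsize
  · rwa [← uIcc_of_le hab]
  · rw [hft, Rat.cast_def]
    rfl
end
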